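/- arXiv:2312.15853 — 9 statements merged into one kernel-verified Lean document; each statement's English description precedes it below -/
import Mathlib

section
/- For every real β > 0, the function g(κ) = β·κ + (Real.log κ)² on (0, ∞) has a unique critical point κ* (i.e., a unique κ > 0 with β·κ + 2·Real.log κ = 0); this κ* lies in the open interval (0, 1), and g attains its strict global minimum on (0, ∞) at κ*. -/
/-!
Write `t = log κ`. At a critical point `κs` we have `β κs = -2 log κs`, and the tangent-line bound
`log x ≤ x - 1` at `x = κ / κs` together with the expansion of `(log κ)²` around `log κs` gives
`g κs + (log κ - log κs)² ≤ g κ`, with no derivatives involved. This makes every critical point a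
strict global minimum, so there is at most one; one exists by the intermediate value theorem, and
`2 log κs = -β κs < 0` puts it in `(0, 1)`.
-/

open Real Set

theorem exists_pos_mul_add_two_mul_log_eq_zero {β : ℝ} (hβ : 0 < β) :
    ∃ κ : ℝ, 0 < κ ∧ β * κ + 2 * log κ = 0 := by
  have hcont : ContinuousOn (fun κ : ℝ => β * κ + 2 * log κ) (Icc (exp (-β)) 1) :=
    (continuousOn_const.mul continuousOn_id).add <|
      continuousOn_const.mul <| continuousOn_log.mono fun x hx => (exp_pos _).trans_le hx.1 |>.ne'
  have hneg : β * exp (-β) + 2 * log (exp (-β)) ≤ 0 := by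
    rw [log_exp]
    nlinarith [exp_lt_one_iff.2 (neg_lt_zero.2 hβ)]
  have hpos : 0 ≤ β * 1 + 2 * log 1 := by simpa using hβ.le
  obtain ⟨κ, hκ, hcrit⟩ :=
    intermediate_value_Icc (exp_lt_one_iff.2 (neg_lt_zero.2 hβ)).le hcont ⟨hneg, hpos⟩
  exact ⟨κ, (exp_pos _).trans_le hκ.1, hcrit⟩

theorem mul_add_log_sq_add_sq_le_of_critical {β κs κ : ℝ} (hβ : 0 ≤ β) (hκs : 0 < κs)
    (hcrit : β * κs + 2 * log κs = 0) (hκ : 0 < κ) :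
    β * κs + log κs ^ 2 + (log κ - log κs) ^ 2 ≤ β * κ + log κ ^ 2 := by
  have htangent : κs * (1 + (log κ - log κs)) ≤ κ := by
    have h := log_le_sub_one_of_pos (div_pos hκ hκs)
    rw [log_div hκ.ne' hκs.ne', le_sub_iff_add_le, le_div_iff₀ hκs] at h
    linarith
  nlinarith [mul_le_mul_of_nonneg_left htangent hβ]

/-- For `β > 0` (hard sample), the function `g(κ) = β·κ + (log κ)²` on `(0, ∞)`
has a unique critical point `κ*` (the unique `κ > 0` with `β·κ + 2·log κ = 0`);
this `κ*` lies in `(0, 1)`, and `g` attains its strict global minimum on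
`(0, ∞)` at `κ*`. -/
theorem crucial_optimal_confidence_hard (β : ℝ) (hβ : 0 < β) :
    ∃ κs : ℝ,
      (0 < κs ∧ β * κs + 2 * Real.log κs = 0) ∧
      (∀ κ : ℝ, 0 < κ → β * κ + 2 * Real.log κ = 0 → κ = κs) ∧
      κs ∈ Set.Ioo (0 : ℝ) 1 ∧
      (∀ κ : ℝ, 0 < κ → κ ≠ κs →
        β * κs + (Real.log κs) ^ 2 < β * κ + (Real.log κ) ^ 2) := by
  obtain ⟨κs, hκs, hcrit⟩ := exists_pos_mul_add_two_mul_log_eq_zero hβ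
  have hmin κ (hκ : 0 < κ) := mul_add_log_sq_add_sq_le_of_critical hβ.le hκs hcrit hκ
  refine ⟨κs, ⟨hκs, hcrit⟩, fun κ hκ hcritκ => ?_, ⟨hκs, ?_⟩, fun κ hκ hne => ?_⟩
  · have hback := mul_add_log_sq_add_sq_le_of_critical hβ.le hκ hcritκ hκs
    have hlog : log κ = log κs := by nlinarith [hmin κ hκ]
    exact log_injOn_pos hκ hκs hlog
  · have : 0 < β * κs := mul_pos hβ hκs
    exact (log_neg_iff hκs).1 (by linarith)
  · have hlog : log κ - log κs ≠ 0 :=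
      sub_ne_zero.2 fun h => hne (log_injOn_pos hκ hκs h)
    linarith [hmin κ hκ, sq_pos_of_ne_zero hlog]
end

section
/- For every real β with −2/e < β < 0, the equation β·κ + 2·Real.log κ = 0 has exactly two solutions in (0, ∞), say κ₁ < κ₂, and they satisfy 1 < κ₁ < e < κ₂; moreover κ₁ is a strict local minimizer and κ₂ is a strict local maximizer of the function g(κ) = β·κ + (Real.log κ)² on (0, ∞). -/
open Real Set Filter

/-!
`g'(κ) = h(κ) / κ` with `h(κ) = β κ + 2 log κ`, and `h` is strictly concave on `(0, ∞)`.
Since `h 1 = β < 0`, `h e = β e + 2 > 0` (this is `β > -2/e`) and `h κ → -∞` (`log` grows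
sublinearly), `h` has a zero in `(1, e)` and one beyond `e`; strict concavity forces `h` to be
negative outside and positive between them, so they are its only zeros, and the sign pattern
`-, +, -` of `g'` makes the first a strict local minimum and the second a strict local maximum
of `g`.
-/

namespace StrictConcaveOn

variable {s : Set ℝ} {f : ℝ → ℝ} {a b x : ℝ}

theorem pos_of_mem_Ioo_of_eq_zero (hf : StrictConcaveOn ℝ s f) (ha : a ∈ s) (hb : b ∈ s)
    (hfa : f a = 0) (hfb : f b = 0) (hx : x ∈ Ioo a b) : 0 < f x := by
  have hab : a < b := hx.1.trans hx.2
  have := hf.lt_on_openSegment ha hb hab.ne (by rwa [openSegment_eq_Ioo hab])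
  rwa [hfa, hfb, min_self] at this

theorem neg_of_lt_of_eq_zero (hf : StrictConcaveOn ℝ s f) (hx : x ∈ s) (hb : b ∈ s)
    (hfa : f a = 0) (hfb : f b = 0) (hxa : x < a) (hab : a < b) : f x < 0 := by
  have := hf.slope_anti_adjacent hx hb hxa hab
  rw [hfa, hfb, sub_self, zero_div, zero_sub, neg_div, neg_pos] at this
  exact neg_of_div_neg_left this (sub_pos.2 hxa).le

theorem neg_of_gt_of_eq_zero (hf : StrictConcaveOn ℝ s f) (ha : a ∈ s) (hx : x ∈ s)
    (hfa : f a = 0) (hfb : f b = 0) (hab : a < b) (hbx : b < x) : f x < 0 := by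
  have := hf.slope_anti_adjacent ha hx hab hbx
  rw [hfa, hfb, sub_self, zero_div, sub_zero] at this
  exact neg_of_div_neg_left this (sub_pos.2 hbx).le

theorem eq_or_eq_of_eq_zero (hf : StrictConcaveOn ℝ s f) (ha : a ∈ s) (hb : b ∈ s)
    (hfa : f a = 0) (hfb : f b = 0) (hab : a < b) (hx : x ∈ s) (hfx : f x = 0) :
    x = a ∨ x = b := by
  by_contra! hne
  rcases hne.1.lt_or_gt with hxa | hax
  · exact (hf.neg_of_lt_of_eq_zero hx hb hfa hfb hxa hab).ne hfx
  rcases hne.2.lt_or_gt with hxb | hbx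
  · exact (hf.pos_of_mem_Ioo_of_eq_zero ha hb hfa hfb ⟨hax, hxb⟩).ne' hfx
  · exact (hf.neg_of_gt_of_eq_zero ha hx hfa hfb hab hbx).ne hfx

end StrictConcaveOn

section DerivativeTest

variable {f f' : ℝ → ℝ} {a b c : ℝ}

theorem exists_strictLocalMin_of_hasDerivAt (hab : a < b) (hbc : b < c)
    (hf : ∀ x ∈ Ioo a c, HasDerivAt f (f' x) x) (hleft : ∀ x ∈ Ioo a b, f' x < 0)
    (hright : ∀ x ∈ Ioo b c, 0 < f' x) :
    ∃ δ > 0, ∀ x, |x - b| < δ → x ≠ b → f b < f x := by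
  have hcont : ContinuousOn f (Ioo a c) := fun x hx ↦ (hf x hx).continuousAt.continuousWithinAt
  have hanti : StrictAntiOn f (Ioc a b) := by
    refine strictAntiOn_of_hasDerivWithinAt_neg (f' := f') (convex_Ioc a b)
      (hcont.mono (Ioc_subset_Ioo_right hbc)) (fun x hx ↦ ?_) (fun x hx ↦ ?_)
    all_goals rw [interior_Ioc] at hx
    exacts [(hf x ⟨hx.1, hx.2.trans hbc⟩).hasDerivWithinAt, hleft x hx]
  have hmono : StrictMonoOn f (Ico b c) := by
    refine strictMonoOn_of_hasDerivWithinAt_pos (f' := f') (convex_Ico b c)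
      (hcont.mono (Ico_subset_Ioo_left hab)) (fun x hx ↦ ?_) (fun x hx ↦ ?_)
    all_goals rw [interior_Ico] at hx
    exacts [(hf x ⟨hab.trans hx.1, hx.2⟩).hasDerivWithinAt, hright x hx]
  refine ⟨min (b - a) (c - b), lt_min (sub_pos.2 hab) (sub_pos.2 hbc), fun x hx hxb ↦ ?_⟩
  obtain ⟨hxa, hxc⟩ : a < x ∧ x < c := by
    rw [abs_sub_lt_iff, lt_min_iff, lt_min_iff] at hx
    constructor <;> linarith
  rcases hxb.lt_or_gt with hxb | hbx
  · exact hanti ⟨hxa, hxb.le⟩ ⟨hab, le_rfl⟩ hxb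
  · exact hmono ⟨le_rfl, hbc⟩ ⟨hbx.le, hxc⟩ hbx

theorem exists_strictLocalMax_of_hasDerivAt (hab : a < b) (hbc : b < c)
    (hf : ∀ x ∈ Ioo a c, HasDerivAt f (f' x) x) (hleft : ∀ x ∈ Ioo a b, 0 < f' x)
    (hright : ∀ x ∈ Ioo b c, f' x < 0) :
    ∃ δ > 0, ∀ x, |x - b| < δ → x ≠ b → f x < f b := by
  obtain ⟨δ, hδ, H⟩ := exists_strictLocalMin_of_hasDerivAt (f := -f) (f' := -f') hab hbc
    (fun x hx ↦ (hf x hx).neg) (fun x hx ↦ neg_neg_of_pos (hleft x hx))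
    (fun x hx ↦ neg_pos_of_neg (hright x hx))
  exact ⟨δ, hδ, fun x hx hxb ↦ neg_lt_neg_iff.1 (H x hx hxb)⟩

end DerivativeTest

theorem strictConcaveOn_mul_add_two_log (β : ℝ) :
    StrictConcaveOn ℝ (Ioi 0) fun κ ↦ β * κ + 2 * log κ := by
  refine ⟨convex_Ioi 0, fun x hx y hy hxy a b ha hb hab ↦ ?_⟩
  have := strictConcaveOn_log_Ioi.2 hx hy hxy ha hb hab
  simp only [smul_eq_mul] at this ⊢
  linear_combination 2 * this

theorem continuousOn_mul_add_two_log (β : ℝ) :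
    ContinuousOn (fun κ ↦ β * κ + 2 * log κ) (Ioi 0) :=
  (continuousOn_const.mul continuousOn_id).add
    (continuousOn_const.mul (continuousOn_log.mono fun _ hx ↦ ne_of_gt hx))

theorem exists_gt_mul_add_two_log_neg {β : ℝ} (hβ : β < 0) (c : ℝ) :
    ∃ K, c < K ∧ β * K + 2 * log K < 0 := by
  have hsmall := isLittleO_log_id_atTop.bound (show 0 < -β / 4 by linarith)
  obtain ⟨K, hK, hcK⟩ := (hsmall.and (eventually_gt_atTop (max c 0))).exists
  have hKpos : 0 < K := (le_max_right c 0).trans_lt hcK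
  rw [norm_eq_abs, id, norm_of_nonneg hKpos.le] at hK
  refine ⟨K, (le_max_left c 0).trans_lt hcK, ?_⟩
  nlinarith [le_abs_self (log K)]

theorem hasDerivAt_mul_add_log_sq (β : ℝ) {x : ℝ} (hx : 0 < x) :
    HasDerivAt (fun κ ↦ β * κ + log κ ^ 2) ((β * x + 2 * log x) / x) x := by
  refine (((hasDerivAt_id x).const_mul β).add ((hasDerivAt_log hx.ne').pow 2)).congr_deriv ?_
  field_simp
  norm_num

/-- For `−2/e < β < 0` (easy sample), the equation `β·κ + 2·log κ = 0` has
exactly two solutions `κ₁ < κ₂` in `(0, ∞)`, with `1 < κ₁ < e < κ₂`;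
moreover `κ₁` is a strict local minimizer and `κ₂` a strict local maximizer
of `g(κ) = β·κ + (log κ)²` on `(0, ∞)`. -/
theorem crucial_optimal_confidence_easy (β : ℝ)
    (h₁ : -2 / Real.exp 1 < β) (h₂ : β < 0) :
    ∃ κ₁ κ₂ : ℝ,
      κ₁ < κ₂ ∧
      1 < κ₁ ∧ κ₁ < Real.exp 1 ∧ Real.exp 1 < κ₂ ∧
      (0 < κ₁ ∧ β * κ₁ + 2 * Real.log κ₁ = 0) ∧
      (0 < κ₂ ∧ β * κ₂ + 2 * Real.log κ₂ = 0) ∧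
      (∀ κ : ℝ, 0 < κ → β * κ + 2 * Real.log κ = 0 → κ = κ₁ ∨ κ = κ₂) ∧
      (∃ δ > (0 : ℝ), ∀ κ : ℝ, 0 < κ → |κ - κ₁| < δ → κ ≠ κ₁ →
        β * κ₁ + (Real.log κ₁) ^ 2 < β * κ + (Real.log κ) ^ 2) ∧
      (∃ δ > (0 : ℝ), ∀ κ : ℝ, 0 < κ → |κ - κ₂| < δ → κ ≠ κ₂ →
        β * κ + (Real.log κ) ^ 2 < β * κ₂ + (Real.log κ₂) ^ 2) := by
  have hconc := strictConcaveOn_mul_add_two_log β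
  have hcont := continuousOn_mul_add_two_log β
  have hneg_one : β * 1 + 2 * log 1 < 0 := by simpa using h₂
  have hpos_exp : 0 < β * exp 1 + 2 * log (exp 1) := by
    rw [div_lt_iff₀ (exp_pos 1)] at h₁
    rw [log_exp]
    linarith
  obtain ⟨K, hexpK, hnegK⟩ := exists_gt_mul_add_two_log_neg h₂ (exp 1)
  obtain ⟨κ₁, ⟨hκ₁, hκ₁e⟩, hzero₁⟩ := intermediate_value_Ioo (one_lt_exp_iff.2 one_pos).le
    (hcont.mono fun _ hx ↦ one_pos.trans_le hx.1) ⟨hneg_one, hpos_exp⟩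
  obtain ⟨κ₂, ⟨heκ₂, -⟩, hzero₂⟩ := intermediate_value_Ioo' hexpK.le
    (hcont.mono fun _ hx ↦ (exp_pos 1).trans_le hx.1) ⟨hnegK, hpos_exp⟩
  have hpos₁ : 0 < κ₁ := one_pos.trans hκ₁
  have hpos₂ : 0 < κ₂ := (exp_pos 1).trans heκ₂
  have hlt : κ₁ < κ₂ := hκ₁e.trans heκ₂
  have hderiv : ∀ x ∈ Ioi (0 : ℝ), HasDerivAt (fun κ ↦ β * κ + log κ ^ 2)
      ((β * x + 2 * log x) / x) x := fun x hx ↦ hasDerivAt_mul_add_log_sq β hx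
  obtain ⟨δ₁, hδ₁, hmin⟩ := exists_strictLocalMin_of_hasDerivAt hpos₁ hlt
    (fun x hx ↦ hderiv x hx.1)
    (fun x hx ↦ div_neg_of_neg_of_pos
      (hconc.neg_of_lt_of_eq_zero hx.1 hpos₂ hzero₁ hzero₂ hx.2 hlt) hx.1)
    (fun x hx ↦ div_pos (hconc.pos_of_mem_Ioo_of_eq_zero hpos₁ hpos₂ hzero₁ hzero₂ hx)
      (hpos₁.trans hx.1))
  obtain ⟨δ₂, hδ₂, hmax⟩ := exists_strictLocalMax_of_hasDerivAt hlt (lt_add_one κ₂)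
    (fun x hx ↦ hderiv x (hpos₁.trans hx.1))
    (fun x hx ↦ div_pos (hconc.pos_of_mem_Ioo_of_eq_zero hpos₁ hpos₂ hzero₁ hzero₂ hx)
      (hpos₁.trans hx.1))
    (fun x hx ↦ div_neg_of_neg_of_pos
      (hconc.neg_of_gt_of_eq_zero hpos₁ (hpos₂.trans hx.1) hzero₁ hzero₂ hlt hx.1)
      (hpos₂.trans hx.1))
  exact ⟨κ₁, κ₂, hlt, hκ₁, hκ₁e, heκ₂, ⟨hpos₁, hzero₁⟩, ⟨hpos₂, hzero₂⟩,
    fun κ hκ ↦ hconc.eq_or_eq_of_eq_zero hpos₁ hpos₂ hzero₁ hzero₂ hlt hκ,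
    ⟨δ₁, hδ₁, fun κ _ ↦ hmin κ⟩, ⟨δ₂, hδ₂, fun κ _ ↦ hmax κ⟩⟩
end

section
/- For every real β > −2/e, the function f(x) = β·Real.exp x + x² has exactly one local minimizer x* on ℝ; this x* satisfies β·Real.exp x* + 2·x* = 0, and the second derivative is positive there: β·Real.exp x* + 2 > 0. -/
/-!
Critical points of `f x = β eˣ + x²` are the zeros of `g x = β eˣ + 2x`, and at such a zero
`f'' = β eˣ + 2 = 2 (1 - x)`. Since `β e + 2 > 0`, `g` is strictly increasing on `(-∞, 1]`, negative
far to the left and positive at `1`, so it has exactly one zero `x* < 1`, a local minimum by the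
second-derivative test. Any other local minimum is a zero of `g` with `f'' ≥ 0`, hence lies in
`(-∞, 1]`, hence is `x*`.
-/

open Real Set Filter Topology

-- If `f'' < 0` the local minimum would also be a local maximum, so `f` would be locally constant.
theorem IsLocalMin.deriv_deriv_nonneg {f : ℝ → ℝ} {x₀ : ℝ} (h : IsLocalMin f x₀)
    (hc : ContinuousAt f x₀) : 0 ≤ deriv (deriv f) x₀ := by
  by_contra! hneg
  have hmax : IsLocalMax f x₀ := isLocalMax_of_deriv_deriv_neg hneg h.deriv_eq_zero hc
  have hconst : f =ᶠ[𝓝 x₀] fun _ => f x₀ :=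
    (h.and hmax).mono fun _ hx => le_antisymm hx.2 hx.1
  have hzero : deriv (deriv f) x₀ = 0 := by
    simpa only [deriv_const', deriv_const] using hconst.deriv.deriv_eq
  exact hneg.ne hzero

theorem hasDerivAt_mul_exp_add_sq (β x : ℝ) :
    HasDerivAt (fun x => β * exp x + x ^ 2) (β * exp x + 2 * x) x := by
  simpa using ((hasDerivAt_exp x).const_mul β).fun_add (hasDerivAt_pow 2 x)

theorem hasDerivAt_mul_exp_add_two_mul (β x : ℝ) :
    HasDerivAt (fun x => β * exp x + 2 * x) (β * exp x + 2) x := by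
  simpa using ((hasDerivAt_exp x).const_mul β).fun_add ((hasDerivAt_id x).const_mul 2)

theorem deriv_mul_exp_add_sq (β : ℝ) :
    deriv (fun x => β * exp x + x ^ 2) = fun x => β * exp x + 2 * x :=
  funext fun x => (hasDerivAt_mul_exp_add_sq β x).deriv

theorem deriv_deriv_mul_exp_add_sq (β : ℝ) :
    deriv (deriv fun x => β * exp x + x ^ 2) = fun x => β * exp x + 2 := by
  rw [deriv_mul_exp_add_sq]
  exact funext fun x => (hasDerivAt_mul_exp_add_two_mul β x).deriv

theorem continuous_mul_exp_add_two_mul (β : ℝ) : Continuous fun x => β * exp x + 2 * x :=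
  continuous_iff_continuousAt.2 fun x => (hasDerivAt_mul_exp_add_two_mul β x).continuousAt

theorem mul_exp_add_two_pos {β : ℝ} (hβ : -2 / exp 1 < β) {x : ℝ} (hx : x ≤ 1) :
    0 < β * exp x + 2 := by
  have hβe : -2 < β * exp 1 := (div_lt_iff₀ (exp_pos 1)).1 hβ
  rcases le_or_gt 0 β with hβ0 | hβ0
  · have := exp_pos x
    positivity
  · linarith [mul_le_mul_of_nonpos_left (exp_le_exp.2 hx) hβ0.le]

theorem strictMonoOn_mul_exp_add_two_mul {β : ℝ} (hβ : -2 / exp 1 < β) :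
    StrictMonoOn (fun x => β * exp x + 2 * x) (Iic 1) := by
  refine strictMonoOn_of_deriv_pos (convex_Iic 1)
    (continuous_mul_exp_add_two_mul β).continuousOn fun x hx => ?_
  rw [interior_Iic] at hx
  rw [(hasDerivAt_mul_exp_add_two_mul β x).deriv]
  exact mul_exp_add_two_pos hβ hx.le

theorem exists_lt_one_mul_exp_add_two_mul_eq_zero {β : ℝ} (hβ : -2 / exp 1 < β) :
    ∃ x < 1, β * exp x + 2 * x = 0 := by
  -- `a ≤ 0` gives `β eᵃ ≤ |β|`, so `β eᵃ + 2a ≤ -|β| - 2 < 0`.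
  set a := -|β| - 1
  have ha : a < 1 := by linarith [abs_nonneg β]
  have hga : β * exp a + 2 * a < 0 := by
    have hexp : exp a ≤ 1 := exp_le_one_iff.2 (by linarith [abs_nonneg β])
    have : β * exp a ≤ |β| :=
      (mul_le_mul_of_nonneg_right (le_abs_self β) (exp_pos a).le).trans
        (mul_le_of_le_one_right (abs_nonneg β) hexp)
    linarith
  have hg1 : 0 < β * exp 1 + 2 * 1 := by linarith [mul_exp_add_two_pos hβ le_rfl]
  obtain ⟨x, hx, hgx⟩ := intermediate_value_Ioo ha.le
    (continuous_mul_exp_add_two_mul β).continuousOn ⟨hga, hg1⟩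
  exact ⟨x, hx.2, hgx⟩

/-- For every `β > −2/e`, the function `f(x) = β·eˣ + x²` has exactly one
local minimizer `x*` on `ℝ`; this `x*` satisfies the critical-point equation
`β·e^{x*} + 2·x* = 0`, and the second derivative is positive there:
`β·e^{x*} + 2 > 0`. -/
theorem crucial_single_local_minimum (β : ℝ) (hβ : -2 / Real.exp 1 < β) :
    ∃ xs : ℝ,
      IsLocalMin (fun x : ℝ => β * Real.exp x + x ^ 2) xs ∧
      (∀ y : ℝ, IsLocalMin (fun x : ℝ => β * Real.exp x + x ^ 2) y → y = xs) ∧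
      β * Real.exp xs + 2 * xs = 0 ∧
      0 < β * Real.exp xs + 2 := by
  obtain ⟨xs, hxs1, hcrit⟩ := exists_lt_one_mul_exp_add_two_mul_eq_zero hβ
  have hcont (y : ℝ) := (hasDerivAt_mul_exp_add_sq β y).continuousAt
  refine ⟨xs, ?_, fun y hy => ?_, hcrit, by linarith⟩
  · refine isLocalMin_of_deriv_deriv_pos ?_ ?_ (hcont xs)
    · rw [deriv_deriv_mul_exp_add_sq]
      linarith
    · rw [deriv_mul_exp_add_sq]
      exact hcrit
  · have hcrit_y : β * exp y + 2 * y = 0 := by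
      simpa only [deriv_mul_exp_add_sq] using hy.deriv_eq_zero
    have hsecond := hy.deriv_deriv_nonneg (hcont y)
    rw [deriv_deriv_mul_exp_add_sq] at hsecond
    have hy1 : y ≤ 1 := by linarith
    exact strictMonoOn_mul_exp_add_two_mul hβ |>.injOn hy1 hxs1.le (hcrit_y.trans hcrit.symm)
end

section
/- Differentiated scaling (Property 4). Let λ > 0 and ε ∈ ℝ. Let l_i < ε with (l_i − ε)/λ > −2/e, and let l_j > ε. Suppose κ_i ∈ (1, e) satisfies ((l_i − ε)/λ)·κ_i + 2·Real.log κ_i = 0 and κ_j ∈ (0, 1) satisfies ((l_j − ε)/λ)·κ_j + 2·Real.log κ_j = 0 (these are the optimal confidences of the CRUCIAL loss for the easy sample l_i and the hard sample l_j respectively). Then (κ_i·(l_i − ε) + λ·(Real.log κ_i)²)/(l_i − ε) > (κ_j·(l_j − ε) + λ·(Real.log κ_j)²)/(l_j − ε); in fact the left-hand side is greater than 1 and the right-hand side is less than 1. -/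
set_option maxHeartbeats 1600000 in
/-- Differentiated scaling (Property 4) of the CRUCIAL loss
`L(l, κ) = κ·(l − ε) + λ·(log κ)²`: for an easy sample `l_i < ε`
(with `(l_i − ε)/λ > −2/e`) and a hard sample `l_j > ε`, evaluating the loss
at the respective optimal confidences `κ_i ∈ (1, e)` and `κ_j ∈ (0, 1)`
(characterized by the critical-point equation `((l − ε)/λ)·κ + 2·log κ = 0`)
yields `L_i/(l_i − ε) > L_j/(l_j − ε)`; in fact the left-hand side is
greater than `1` and the right-hand side is less than `1`. -/
theorem crucial_differentiated_scaling (lam ε li lj κi κj : ℝ)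
    (hlam : 0 < lam)
    (hli : li < ε) (hli' : -2 / Real.exp 1 < (li - ε) / lam)
    (hlj : ε < lj)
    (hκi : κi ∈ Set.Ioo 1 (Real.exp 1))
    (hκi' : ((li - ε) / lam) * κi + 2 * Real.log κi = 0)
    (hκj : κj ∈ Set.Ioo (0 : ℝ) 1)
    (hκj' : ((lj - ε) / lam) * κj + 2 * Real.log κj = 0) :
    (κj * (lj - ε) + lam * (Real.log κj) ^ 2) / (lj - ε) <
      (κi * (li - ε) + lam * (Real.log κi) ^ 2) / (li - ε) ∧
    1 < (κi * (li - ε) + lam * (Real.log κi) ^ 2) / (li - ε) ∧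
    (κj * (lj - ε) + lam * (Real.log κj) ^ 2) / (lj - ε) < 1 := by
  obtain ⟨hκi1, hκie⟩ := hκi
  obtain ⟨hκj0, hκj1⟩ := hκj
  have hκipos : (0:ℝ) < κi := lt_trans one_pos hκi1
  set ti := Real.log κi with hti
  set tj := Real.log κj with htj
  have hdi : li - ε < 0 := by linarith
  have hdj : 0 < lj - ε := by linarith
  have hreli : (li - ε) * κi = -2 * lam * ti := by
    have := hκi'
    field_simp at this
    linarith
  have hrelj : (lj - ε) * κj = -2 * lam * tj := by
    have := hκj'
    field_simp at this
    linarith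
  have hreli2 : ((li - ε) * κi) * κi = (-2 * lam * ti) * κi := by rw [hreli]
  have hrelj2 : ((lj - ε) * κj) * κj = (-2 * lam * tj) * κj := by rw [hrelj]
  have hti0 : 0 < ti := Real.log_pos hκi1
  have hti1 : ti < 1 := by
    have := Real.log_lt_log hκipos hκie
    rwa [Real.log_exp] at this
  have htj0 : tj < 0 := Real.log_neg hκj0 hκj1
  have hexpti : κi = Real.exp ti := (Real.exp_log hκipos).symm
  have hexptj : κj = Real.exp tj := (Real.exp_log hκj0).symm
  have hi_exp : 1 + ti < κi := by
    have := Real.add_one_lt_exp (ne_of_gt hti0)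
    rw [← hexpti] at this
    linarith
  have hj_exp : κj * (1 - tj) < 1 := by
    have h1 : -tj + 1 < Real.exp (-tj) := Real.add_one_lt_exp (by linarith)
    have h2 : κj * Real.exp (-tj) = 1 := by
      rw [hexptj, ← Real.exp_add]; simp
    nlinarith
  -- easy side: 1 < L_i / (li - ε)
  have hLi : 1 < (κi * (li - ε) + lam * ti ^ 2) / (li - ε) := by
    rw [lt_div_iff_of_neg hdi]
    have key : ti * (ti * κi - 2 * κi + 2) < 0 := by
      have : 2 < κi * (2 - ti) := by nlinarith
      nlinarith
    have h2 : lam * (ti * (ti * κi - 2 * κi + 2)) < 0 := mul_neg_of_pos_of_neg hlam key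
    have h3 : (κi * (li - ε) + lam * ti ^ 2 - 1 * (li - ε)) * κi =
        lam * (ti * (ti * κi - 2 * κi + 2)) := by
      linear_combination (κi - 1) * hreli
    rw [← h3] at h2
    nlinarith [h2, hκipos]
  -- hard side: L_j / (lj - ε) < 1
  have hLj : (κj * (lj - ε) + lam * tj ^ 2) / (lj - ε) < 1 := by
    rw [div_lt_one hdj]
    have key : tj * (tj * κj - 2 * κj + 2) < 0 := by
      have : 0 < tj * κj - 2 * κj + 2 := by nlinarith
      nlinarith
    have h2 : lam * (tj * (tj * κj - 2 * κj + 2)) < 0 := mul_neg_of_pos_of_neg hlam key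
    have h3 : (κj * (lj - ε) + lam * tj ^ 2 - (lj - ε)) * κj =
        lam * (tj * (tj * κj - 2 * κj + 2)) := by
      linear_combination (κj - 1) * hrelj
    rw [← h3] at h2
    nlinarith [h2, hκj0]
  exact ⟨lt_trans hLj hLi, hLi, hLj⟩
end

section
/- For fixed real numbers l, ε with l > ε, define m(λ) = ⨅ (infimum over κ > 0) of κ·(l − ε) + λ·(Real.log κ)² for each λ > 0. Then m(λ) tends to l − ε as λ → ∞. -/
/-- For a hard sample `l > ε`, the optimal CRUCIAL loss
`m(λ) = inf_{κ > 0} (κ·(l − ε) + λ·(log κ)²)` tends to the translated input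
loss `l − ε` as `λ → ∞`. -/
theorem crucial_limit_lambda_top (l ε : ℝ) (h : ε < l) :
    Filter.Tendsto
      (fun lam : ℝ =>
        ⨅ κ : {κ : ℝ // 0 < κ}, ((κ : ℝ) * (l - ε) + lam * (Real.log κ) ^ 2))
      Filter.atTop (nhds (l - ε)) := by
  haveI : Nonempty {κ : ℝ // 0 < κ} := ⟨⟨1, one_pos⟩⟩
  have hl : (0:ℝ) < l - ε := by linarith
  rw [tendsto_order]
  constructor
  · intro c hc
    set δ : ℝ := max (1/2) ((c/(l-ε)+1)/2) with hδdef
    have hδ0 : 0 < δ := lt_of_lt_of_le (by norm_num) (le_max_left _ _)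
    have hc1 : c/(l-ε) < 1 := (div_lt_one hl).2 hc
    have hδ1 : δ < 1 := max_lt (by norm_num) (by linarith)
    have hcb : c < δ * (l - ε) := by
      have h1 : c/(l-ε) < δ := lt_of_lt_of_le (by linarith) (le_max_right _ _)
      calc c = c/(l-ε) * (l-ε) := by field_simp
        _ < δ * (l-ε) := by nlinarith
    have hlog : Real.log δ < 0 := Real.log_neg hδ0 hδ1
    have hne : Real.log δ ≠ 0 := ne_of_lt hlog
    have hlog2 : 0 < (Real.log δ)^2 := by positivity
    filter_upwards [Filter.eventually_ge_atTop ((l-ε)/(Real.log δ)^2),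
      Filter.eventually_ge_atTop 0] with lam hlam hlam0
    refine lt_of_lt_of_le hcb (le_ciInf fun κ => ?_)
    obtain ⟨κ, hκ⟩ := κ
    simp only
    rcases le_or_gt δ κ with hk | hk
    · nlinarith [sq_nonneg (Real.log κ)]
    · have hlogκ : Real.log κ ≤ Real.log δ := Real.log_le_log hκ hk.le
      have hsq : (Real.log δ)^2 ≤ (Real.log κ)^2 := by nlinarith
      have h2 : l - ε ≤ lam * (Real.log δ)^2 := by
        have := (div_le_iff₀ hlog2).1 hlam
        linarith
      nlinarith
  · intro c hc
    filter_upwards [Filter.eventually_ge_atTop 0] with lam hlam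
    have hbdd : BddBelow (Set.range fun κ : {κ:ℝ//0<κ} =>
        (κ:ℝ)*(l-ε)+lam*(Real.log κ)^2) := by
      refine ⟨0, ?_⟩
      rintro x ⟨κ, rfl⟩
      dsimp only
      have hκ := κ.2
      nlinarith [sq_nonneg (Real.log (κ:ℝ))]
    have hle := ciInf_le hbdd ⟨1, one_pos⟩
    simp [Real.log_one] at hle
    linarith
end

section
/- For fixed real numbers l, ε with l > ε, define m(λ) = ⨅ (infimum over κ > 0) of κ·(l − ε) + λ·(Real.log κ)² for each λ > 0. Then m(λ) tends to 0 as λ → 0 from the right. -/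
open Filter Real

lemma crucial_aux_tendsto :
    Filter.Tendsto (fun lam : ℝ => lam * (Real.log lam) ^ 2)
      (nhdsWithin 0 (Set.Ioi 0)) (nhds 0) := by
  have h1 : Filter.Tendsto (fun lam : ℝ => (-Real.log lam) ^ 2 * Real.exp (-(-Real.log lam)))
      (nhdsWithin 0 (Set.Ioi 0)) (nhds 0) :=
    (tendsto_pow_mul_exp_neg_atTop_nhds_zero 2).comp
      (tendsto_neg_atBot_atTop.comp Real.tendsto_log_nhdsGT_zero)
  refine h1.congr' ?_
  filter_upwards [self_mem_nhdsWithin] with lam (hl : 0 < lam)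
  rw [neg_neg, Real.exp_log hl, neg_sq, mul_comm]

/-- For a hard sample `l > ε`, the optimal CRUCIAL loss
`m(λ) = inf_{κ > 0} (κ·(l − ε) + λ·(log κ)²)` tends to `0` as `λ → 0⁺`. -/
theorem crucial_limit_lambda_zero (l ε : ℝ) (h : ε < l) :
    Filter.Tendsto
      (fun lam : ℝ =>
        ⨅ κ : {κ : ℝ // 0 < κ}, ((κ : ℝ) * (l - ε) + lam * (Real.log κ) ^ 2))
      (nhdsWithin 0 (Set.Ioi 0)) (nhds 0) := by
  have hle : 0 < l - ε := sub_pos.mpr h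
  have hupper : Filter.Tendsto (fun lam : ℝ => lam * (l - ε) + lam * (Real.log lam) ^ 2)
      (nhdsWithin 0 (Set.Ioi 0)) (nhds 0) := by
    have h2 : Filter.Tendsto (fun lam : ℝ => lam * (l - ε)) (nhdsWithin 0 (Set.Ioi 0)) (nhds 0) := by
      have : Filter.Tendsto (fun lam : ℝ => lam * (l - ε)) (nhds 0) (nhds (0 * (l - ε))) :=
        (continuous_id.mul continuous_const).tendsto 0
      simpa using this.mono_left nhdsWithin_le_nhds
    simpa using h2.add crucial_aux_tendsto
  refine tendsto_of_tendsto_of_tendsto_of_le_of_le' tendsto_const_nhds hupper ?_ ?_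
  · filter_upwards [self_mem_nhdsWithin] with lam (hl : 0 < lam)
    refine le_ciInf fun κ => ?_
    have h1 : 0 ≤ (κ : ℝ) * (l - ε) := mul_nonneg κ.2.le hle.le
    have h2 : 0 ≤ lam * (Real.log κ) ^ 2 := mul_nonneg hl.le (sq_nonneg _)
    linarith
  · filter_upwards [self_mem_nhdsWithin] with lam (hl : 0 < lam)
    have hbdd : BddBelow (Set.range fun κ : {κ : ℝ // 0 < κ} =>
        ((κ : ℝ) * (l - ε) + lam * (Real.log κ) ^ 2)) := by
      refine ⟨0, ?_⟩
      rintro x ⟨κ, rfl⟩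
      have h1 : 0 ≤ (κ : ℝ) * (l - ε) := mul_nonneg κ.2.le hle.le
      have h2 : 0 ≤ lam * (Real.log κ) ^ 2 := mul_nonneg hl.le (sq_nonneg _)
      positivity
    exact ciInf_le hbdd ⟨lam, hl⟩
end

section
/- Fix real numbers l, ε with l > ε. For each λ > 0, let κ(λ) be the unique κ ∈ (0, 1) satisfying ((l − ε)/λ)·κ + 2·Real.log κ = 0 (the optimal confidence of the CRUCIAL loss for the hard sample l). Then κ(λ) tends to 1 as λ → ∞. -/
open Filter Real Set Topology

/-- Since `log k < 0`, the equation forces `c > 0`, hence `log k = -c k / 2 ≥ -c / 2`. -/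
lemma exp_neg_half_le_of_mul_add_two_log_eq_zero {c k : ℝ} (hk : k ∈ Ioo 0 1)
    (hroot : c * k + 2 * log k = 0) : exp (-(c / 2)) ≤ k := by
  obtain ⟨hk0, hk1⟩ := hk
  have hlog_neg : log k < 0 := log_neg hk0 hk1
  have hc : 0 < c := pos_of_mul_pos_left (by linarith : 0 < c * k) hk0.le
  have hck : c * k ≤ c := mul_le_of_le_one_right hc.le hk1.le
  calc exp (-(c / 2)) ≤ exp (log k) := exp_le_exp.mpr (by linarith)
    _ = k := exp_log hk0

theorem crucial_confidence_limit_general (l ε : ℝ) (κ : ℝ → ℝ)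
    (hκ : ∀ lam : ℝ, 0 < lam →
      κ lam ∈ Set.Ioo (0 : ℝ) 1 ∧
        ((l - ε) / lam) * κ lam + 2 * Real.log (κ lam) = 0) :
    Filter.Tendsto κ Filter.atTop (nhds 1) := by
  have hlower : Tendsto (fun lam => exp (-((l - ε) / lam / 2))) atTop (𝓝 1) := by
    have hratio : Tendsto (fun lam : ℝ => (l - ε) / lam) atTop (𝓝 0) :=
      tendsto_const_nhds.div_atTop tendsto_id
    simpa using (hratio.div_const 2).neg.rexp
  refine tendsto_of_tendsto_of_tendsto_of_le_of_le' hlower tendsto_const_nhds ?_ ?_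
  all_goals
    filter_upwards [eventually_gt_atTop 0] with lam hlam
    obtain ⟨hmem, hroot⟩ := hκ lam hlam
  · exact exp_neg_half_le_of_mul_add_two_log_eq_zero hmem hroot
  · exact hmem.2.le

/-- For a hard sample `l > ε`, the optimal confidence `κ(λ)`, i.e. the unique
`κ ∈ (0, 1)` with `((l − ε)/λ)·κ + 2·log κ = 0`, tends to `1` as `λ → ∞`. -/
theorem crucial_confidence_limit (l ε : ℝ) (h : ε < l) (κ : ℝ → ℝ)
    (hκ : ∀ lam : ℝ, 0 < lam →
      κ lam ∈ Set.Ioo (0 : ℝ) 1 ∧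
        ((l - ε) / lam) * κ lam + 2 * Real.log (κ lam) = 0) :
    Filter.Tendsto κ Filter.atTop (nhds 1) :=
  crucial_confidence_limit_general l ε κ hκ
end

section
/- Theorem 1. Let μ ∈ ℝ, σ > 0 and Λ > 0. Let γ = gaussianReal μ σ² and let ν be the exponentially tilted measure of γ with rate Λ, i.e., the probability measure with density x ↦ e^{−Λ·x} / (∫ e^{−Λ·y} dγ(y)) with respect to γ. Then the expected squared error under uniform sampling is E_U = ∫ (x − μ)² dγ(x) = σ², the expected squared error under exponential sampling is E_P = ∫ (x − μ)² dν(x) = σ² + Λ²·σ⁴, and hence E_U < E_P. -/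
/-!
Multiplying the density of `N(m, v)` by `e^{t x}` and completing the square in the exponent gives
a multiple of the density of `N(m + v t, v)`, so tilting a Gaussian only shifts its mean. Since the
second moment of `N(m, v)` about `c` is `v + (m - c)²`, the two errors are `σ²` and
`σ² + (Λ σ²)²`.
-/

open MeasureTheory ProbabilityTheory Real
open scoped NNReal

namespace ProbabilityTheory

variable {m : ℝ} {v : ℝ≥0}

lemma integral_sub_sq_gaussianReal (c : ℝ) :
    ∫ x, (x - c) ^ 2 ∂gaussianReal m v = v + (m - c) ^ 2 := by
  have h_map : ∫ x, (x - c) ^ 2 ∂gaussianReal m v = ∫ x, x ^ 2 ∂gaussianReal (m - c) v := by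
    rw [← gaussianReal_map_sub_const c, integral_map (by fun_prop) (by fun_prop)]
  have h_var := variance_eq_sub (memLp_id_gaussianReal (μ := m - c) (v := v) 2)
  simp only [variance_id_gaussianReal, Pi.pow_apply, id_eq, integral_id_gaussianReal] at h_var
  linarith

lemma integral_exp_mul_gaussianReal (t : ℝ) :
    ∫ x, exp (t * x) ∂gaussianReal m v = exp (m * t + v * t ^ 2 / 2) := by
  simpa [mgf] using congrFun (mgf_fun_id_gaussianReal (μ := m) (v := v)) t

lemma gaussianPDFReal_mul_exp_mul (t x : ℝ) :
    gaussianPDFReal m v x * exp (t * x)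
      = exp (m * t + v * t ^ 2 / 2) * gaussianPDFReal (m + v * t) v x := by
  rcases eq_or_ne v 0 with rfl | hv
  · simp [gaussianPDFReal]
  have hv' : (v : ℝ) ≠ 0 := by exact_mod_cast hv
  have h_exponent : -(x - m) ^ 2 / (2 * v) + t * x
      = (m * t + v * t ^ 2 / 2) + -(x - (m + v * t)) ^ 2 / (2 * v) := by
    field_simp
    ring
  simp only [gaussianPDFReal]
  rw [mul_assoc, ← exp_add, h_exponent, exp_add]
  ring

lemma tilted_mul_gaussianReal (t : ℝ) :
    (gaussianReal m v).tilted (t * ·) = gaussianReal (m + v * t) v := by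
  rcases eq_or_ne v 0 with rfl | hv
  · simp only [gaussianReal_zero_var, NNReal.coe_zero, zero_mul, add_zero]
    rw [tilted_congr (g := fun _ ↦ t * m) (by simp [Filter.EventuallyEq]), tilted_const]
  rw [Measure.tilted, integral_exp_mul_gaussianReal, gaussianReal_of_var_ne_zero _ hv,
    gaussianReal_of_var_ne_zero _ hv, ← withDensity_mul _ (measurable_gaussianPDF m v) (by fun_prop)]
  congr 1
  ext x
  simp only [Pi.mul_apply, gaussianPDF, ← ENNReal.ofReal_mul (gaussianPDFReal_nonneg m v x),
    ← mul_div_assoc, gaussianPDFReal_mul_exp_mul, mul_div_cancel_left₀ _ (exp_ne_zero _)]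

end ProbabilityTheory

/-- Theorem 1 of the paper. If losses are Gaussian `γ = gaussianReal μ σ²`
and `ν` is the exponential tilting of `γ` with rate `Λ > 0` (density
`x ↦ e^{−Λx}/∫ e^{−Λy} dγ(y)` w.r.t. `γ`), then the expected squared error
under uniform sampling is `E_U = ∫ (x − μ)² dγ = σ²`, under exponential
sampling it is `E_P = ∫ (x − μ)² dν = σ² + Λ²σ⁴`, and `E_U < E_P`. -/
theorem expected_error_uniform_lt_exponential_gaussian
    (μ : ℝ) (σ : ℝ≥0) (hσ : 0 < σ) (Λ : ℝ) (hΛ : 0 < Λ) :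
    (∫ x, (x - μ) ^ 2 ∂(gaussianReal μ (σ ^ 2)) = (σ : ℝ) ^ 2) ∧
    (∫ x, (x - μ) ^ 2 ∂((gaussianReal μ (σ ^ 2)).withDensity
        (fun x => ENNReal.ofReal (Real.exp (-Λ * x) /
          ∫ y, Real.exp (-Λ * y) ∂(gaussianReal μ (σ ^ 2)))))
      = (σ : ℝ) ^ 2 + Λ ^ 2 * (σ : ℝ) ^ 4) ∧
    (∫ x, (x - μ) ^ 2 ∂(gaussianReal μ (σ ^ 2))) <
      ∫ x, (x - μ) ^ 2 ∂((gaussianReal μ (σ ^ 2)).withDensity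
        (fun x => ENNReal.ofReal (Real.exp (-Λ * x) /
          ∫ y, Real.exp (-Λ * y) ∂(gaussianReal μ (σ ^ 2))))) := by
  -- The density is the one of `Measure.tilted (fun x ↦ -Λ * x)`, by unfolding.
  have h_tilt : (gaussianReal μ (σ ^ 2)).withDensity
        (fun x => ENNReal.ofReal (Real.exp (-Λ * x) /
          ∫ y, Real.exp (-Λ * y) ∂(gaussianReal μ (σ ^ 2))))
      = gaussianReal (μ + (σ ^ 2 : ℝ≥0) * -Λ) (σ ^ 2) :=
    tilted_mul_gaussianReal (-Λ)
  rw [h_tilt, integral_sub_sq_gaussianReal, integral_sub_sq_gaussianReal]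
  push_cast
  refine ⟨by ring, by ring, ?_⟩
  have h_gap : 0 < Λ ^ 2 * (σ : ℝ) ^ 4 := by positivity
  linarith
end

section
/- Let σ > 0 and Λ > 0. Then ∫ |x|·e^{−Λ·|x|} d(gaussianReal 0 σ²)(x) = σ·√(2/π) − Λ·σ² · ∫ e^{−Λ·|x|} d(gaussianReal 0 σ²)(x). Consequently, the exponentially reweighted mean of the half-normal distribution, E[|Z|·e^{−Λ|Z|}]/E[e^{−Λ|Z|}], equals −Λ·σ² + σ·√(2/π)/E[e^{−Λ|Z|}]. -/
/-!
The density `p` of `N(0, v)` satisfies `v p' = -x p`, so `-v p(x) e^{-Λx}` is an antiderivative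
of `(x + Λv) p(x) e^{-Λx}`. Integrating over `(0, ∞)` gives
`∫₀^∞ x e^{-Λx} p = v p(0) - Λv ∫₀^∞ e^{-Λx} p`; both integrands of the theorem are even, so
doubling gives the first identity, with `2 v p(0) = √(2v/π) = σ √(2/π)`. Dividing by
`E[e^{-Λ|Z|}] > 0` gives the second.
-/

open MeasureTheory ProbabilityTheory Real Filter Set
open scoped NNReal Topology

lemma norm_exp_neg_mul_le_one {Λ x : ℝ} (hΛ : 0 ≤ Λ) (hx : 0 ≤ x) : ‖exp (-Λ * x)‖ ≤ 1 := by
  rw [norm_of_nonneg (exp_pos _).le, exp_le_one_iff, neg_mul, neg_nonpos]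
  positivity

namespace ProbabilityTheory

lemma gaussianPDFReal_zero_abs (v : ℝ≥0) (x : ℝ) :
    gaussianPDFReal 0 v |x| = gaussianPDFReal 0 v x := by
  simp [gaussianPDFReal]

lemma hasDerivAt_gaussianPDFReal (μ : ℝ) (v : ℝ≥0) (x : ℝ) :
    HasDerivAt (gaussianPDFReal μ v) (-(x - μ) / v * gaussianPDFReal μ v x) x := by
  rw [gaussianPDFReal_def]
  refine ((((hasDerivAt_id' x).sub_const μ).fun_pow 2).fun_neg.div_const (2 * (v : ℝ))).exp
    |>.const_mul (√(2 * π * v))⁻¹ |>.congr_deriv ?_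
  rcases eq_or_ne (v : ℝ) 0 with hv | hv
  · simp [hv]
  · field_simp
    ring

lemma tendsto_gaussianPDFReal_atTop (μ : ℝ) (v : ℝ≥0) :
    Tendsto (gaussianPDFReal μ v) atTop (𝓝 0) := by
  rcases eq_or_ne v 0 with rfl | hv
  · rw [gaussianPDFReal_zero_var]
    exact tendsto_const_nhds
  have hexponent : Tendsto (fun x : ℝ ↦ -(x - μ) ^ 2 / (2 * v)) atTop atBot :=
    (tendsto_neg_atTop_atBot.comp ((tendsto_pow_atTop two_ne_zero).comp
      (tendsto_atTop_add_const_right _ (-μ) tendsto_id))).atBot_div_const (by positivity)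
  simpa [gaussianPDFReal_def] using (tendsto_exp_atBot.comp hexponent).const_mul (√(2 * π * v))⁻¹

lemma integrable_gaussianPDFReal_smul_iff {E : Type*} [NormedAddCommGroup E] [NormedSpace ℝ E]
    {μ : ℝ} {v : ℝ≥0} (hv : v ≠ 0) {f : ℝ → E} :
    Integrable (fun x ↦ gaussianPDFReal μ v x • f x) ↔ Integrable f (gaussianReal μ v) := by
  rw [gaussianReal_of_var_ne_zero _ hv, integrable_withDensity_iff_integrable_smul'
    (measurable_gaussianPDF μ v) (ae_of_all _ fun _ ↦ gaussianPDF_lt_top)]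
  simp

lemma integral_comp_abs_gaussianReal {v : ℝ≥0} (hv : v ≠ 0) (f : ℝ → ℝ) :
    ∫ x, f |x| ∂gaussianReal 0 v = 2 * ∫ x in Ioi 0, gaussianPDFReal 0 v x * f x := by
  calc ∫ x, f |x| ∂gaussianReal 0 v
      = ∫ x, (fun t ↦ gaussianPDFReal 0 v t * f t) |x| := by
        simp [integral_gaussianReal_eq_integral_smul hv, gaussianPDFReal_zero_abs]
    _ = _ := integral_comp_abs (f := fun t ↦ gaussianPDFReal 0 v t * f t)

lemma two_mul_mul_gaussianPDFReal_self (μ : ℝ) (v : ℝ≥0) :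
    2 * v * gaussianPDFReal μ v μ = √(2 * v / π) := by
  rcases eq_or_ne (v : ℝ) 0 with hv | hv
  · simp [hv]
  have hsquare : 2 * v / π = (2 * v) ^ 2 / (2 * π * v) := by
    field_simp
  rw [hsquare, sqrt_div' _ (by positivity), sqrt_sq (by positivity)]
  simp [gaussianPDFReal, div_eq_mul_inv]

lemma integral_Ioi_gaussianPDFReal_mul_mul_exp {v : ℝ≥0} (hv : v ≠ 0) {Λ : ℝ} (hΛ : 0 ≤ Λ) :
    ∫ x in Ioi 0, gaussianPDFReal 0 v x * (x * exp (-Λ * x)) =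
      v * gaussianPDFReal 0 v 0 - Λ * v * ∫ x in Ioi 0, gaussianPDFReal 0 v x * exp (-Λ * x) := by
  set p := gaussianPDFReal 0 v
  have hexp_bound : ∀ᵐ x ∂volume.restrict (Ioi (0 : ℝ)), ‖exp (-Λ * x)‖ ≤ 1 :=
    ae_restrict_of_forall_mem measurableSet_Ioi fun x hx ↦ norm_exp_neg_mul_le_one hΛ hx.le
  have hexp_meas : AEStronglyMeasurable (fun x : ℝ ↦ exp (-Λ * x)) (volume.restrict (Ioi 0)) := by
    fun_prop
  have hint₀ : IntegrableOn (fun x ↦ p x * exp (-Λ * x)) (Ioi 0) :=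
    (integrable_gaussianPDFReal 0 v).integrableOn.mul_bdd hexp_meas hexp_bound
  have hint₁ : IntegrableOn (fun x ↦ p x * (x * exp (-Λ * x))) (Ioi 0) := by
    have hmoment : Integrable (fun x ↦ p x * x) :=
      (integrable_gaussianPDFReal_smul_iff hv).2 ((memLp_id_gaussianReal 1).integrable le_rfl)
    simpa only [IntegrableOn, mul_assoc] using hmoment.integrableOn.mul_bdd hexp_meas hexp_bound
  have hderiv : ∀ x, HasDerivAt (fun x ↦ -v * (p x * exp (-Λ * x)))
      (p x * (x * exp (-Λ * x)) + Λ * v * (p x * exp (-Λ * x))) x := by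
    intro x
    refine (((hasDerivAt_gaussianPDFReal 0 v x).fun_mul
      ((hasDerivAt_id' x).const_mul (-Λ)).exp).const_mul (-(v : ℝ))).congr_deriv ?_
    field_simp
    ring
  have hlim : Tendsto (fun x ↦ -v * (p x * exp (-Λ * x))) atTop (𝓝 0) := by
    have hdecay : Tendsto (fun x ↦ p x * exp (-Λ * x)) atTop (𝓝 0) :=
      (tendsto_gaussianPDFReal_atTop 0 v).zero_mul_isBoundedUnder_le
        ⟨1, eventually_map.2 (eventually_ge_atTop 0 |>.mono fun x hx ↦
          norm_exp_neg_mul_le_one hΛ hx)⟩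
    simpa using hdecay.const_mul (-(v : ℝ))
  have hFTC := integral_Ioi_of_hasDerivAt_of_tendsto' (fun x _ ↦ hderiv x)
    (hint₁.add (hint₀.const_mul _)) hlim
  rw [integral_add hint₁ (hint₀.const_mul _), integral_const_mul] at hFTC
  rw [eq_sub_iff_add_eq, hFTC]
  simp

end ProbabilityTheory

/-- Exponentially reweighted mean of the half-normal distribution with scale
`σ`: `∫ |x|·e^{−Λ|x|} = σ·√(2/π) − Λσ²·∫ e^{−Λ|x|}` (all integrals w.r.t.
`gaussianReal 0 σ²`), hence `E[|Z|e^{−Λ|Z|}]/E[e^{−Λ|Z|}] = −Λσ² +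
σ·√(2/π)/E[e^{−Λ|Z|}]`. -/
theorem halfNormal_tilted_mean (σ : ℝ≥0) (hσ : 0 < σ) (Λ : ℝ) (hΛ : 0 < Λ) :
    (∫ x, |x| * Real.exp (-Λ * |x|) ∂(gaussianReal 0 (σ ^ 2)) =
      (σ : ℝ) * Real.sqrt (2 / Real.pi) -
        Λ * (σ : ℝ) ^ 2 *
          ∫ x, Real.exp (-Λ * |x|) ∂(gaussianReal 0 (σ ^ 2))) ∧
    (∫ x, |x| * Real.exp (-Λ * |x|) ∂(gaussianReal 0 (σ ^ 2))) /
        (∫ x, Real.exp (-Λ * |x|) ∂(gaussianReal 0 (σ ^ 2))) =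
      -(Λ * (σ : ℝ) ^ 2) +
        (σ : ℝ) * Real.sqrt (2 / Real.pi) /
          ∫ x, Real.exp (-Λ * |x|) ∂(gaussianReal 0 (σ ^ 2)) := by
  have hv : σ ^ 2 ≠ 0 := pow_ne_zero 2 hσ.ne'
  have hZ : 0 < ∫ x, exp (-Λ * |x|) ∂gaussianReal 0 (σ ^ 2) :=
    integral_exp_pos (Integrable.of_bound (by fun_prop) 1
      (ae_of_all _ fun x ↦ norm_exp_neg_mul_le_one hΛ.le (abs_nonneg x)))
  have hconst : 2 * ((σ ^ 2 : ℝ≥0) : ℝ) * gaussianPDFReal 0 (σ ^ 2) 0 = σ * √(2 / π) := by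
    rw [two_mul_mul_gaussianPDFReal_self, NNReal.coe_pow, mul_div_right_comm,
      sqrt_mul' _ (by positivity), sqrt_sq σ.coe_nonneg]
    ring
  have hmean : ∫ x, |x| * exp (-Λ * |x|) ∂gaussianReal 0 (σ ^ 2) =
      σ * √(2 / π) - Λ * σ ^ 2 * ∫ x, exp (-Λ * |x|) ∂gaussianReal 0 (σ ^ 2) := by
    rw [integral_comp_abs_gaussianReal hv (fun t ↦ t * exp (-Λ * t)),
      integral_comp_abs_gaussianReal hv (fun t ↦ exp (-Λ * t)),
      integral_Ioi_gaussianPDFReal_mul_mul_exp hv hΛ.le, ← hconst]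
    push_cast
    ring
  refine ⟨hmean, ?_⟩
  rw [hmean, sub_div, mul_div_assoc, mul_div_cancel_right₀ _ hZ.ne']
  ring
end
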